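/- Let n ≥ 1 be a natural number. Work in the Clifford algebra Cl(2) of ℝ² with the standard positive definite quadratic form, with canonical embedding ι. Let α₁ = (1, 0) and α₂ = (−cos(π/n), sin(π/n)) be the simple roots of the Coxeter group I₂(n), and let W = ι(α₁)·ι(α₂) be the Coxeter versor (the rotor encoding the Coxeter element s₁s₂). Then W = −cos(π/n)·1 + sin(π/n)·ι(e₁)ι(e₂), and Wⁿ = (−1)^(n+1)·1; in particular the Coxeter element of I₂(n) has order n. -/
import Mathlib


noncomputable section

open Real

/-- The standard positive definite quadratic form on ℝ²: `Q(x) = x₁² + x₂²`. -/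
def Q2 : QuadraticForm ℝ (Fin 2 → ℝ) :=
  QuadraticMap.weightedSumSquares ℝ (![1, 1] : Fin 2 → ℝ)

/-- The Clifford algebra `Cl(2)` of the Euclidean plane. -/
abbrev Cl2 : Type := CliffordAlgebra Q2

/-- The canonical embedding `ι : ℝ² → Cl(2)`, satisfying `ι(v)² = Q(v)·1`. -/
def ι2 : (Fin 2 → ℝ) →ₗ[ℝ] Cl2 := CliffordAlgebra.ι Q2

/-- The first simple root `α₁ = (1, 0)` of `I₂(n)`. -/
def α₁ : Fin 2 → ℝ := ![1, 0]

/-- The second simple root `α₂ = (−cos(π/n), sin(π/n))` of `I₂(n)`. -/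
def α₂ (n : ℕ) : Fin 2 → ℝ := ![-cos (π / n), sin (π / n)]

/-- The Coxeter versor `W = ι(α₁)·ι(α₂)` of `I₂(n)`, the rotor encoding the
Coxeter element `s₁s₂`. -/
def coxeterVersor (n : ℕ) : Cl2 := ι2 α₁ * ι2 (α₂ n)
def B2 : Cl2 := ι2 ![1, 0] * ι2 ![0, 1]

lemma Q2_apply (v : Fin 2 → ℝ) : Q2 v = v 0 * v 0 + v 1 * v 1 := by
  simp [Q2, QuadraticMap.weightedSumSquares_apply, Fin.sum_univ_two]

lemma e1_sq : ι2 ![1, 0] * ι2 ![1, 0] = 1 := by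
  rw [ι2, CliffordAlgebra.ι_sq_scalar, Q2_apply]; norm_num

lemma e2_sq : ι2 ![0, 1] * ι2 ![0, 1] = 1 := by
  rw [ι2, CliffordAlgebra.ι_sq_scalar, Q2_apply]; norm_num

lemma e_anticomm : ι2 ![0, 1] * ι2 ![1, 0] = - (ι2 ![1, 0] * ι2 ![0, 1]) := by
  have h := CliffordAlgebra.ι_mul_ι_add_swap (Q := Q2) ![1, 0] ![0, 1]
  have hp : QuadraticMap.polar Q2 ![1, 0] ![0, 1] = 0 := by
    simp [QuadraticMap.polar, Q2_apply, Matrix.cons_add_cons]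
  rw [hp, map_zero] at h
  rw [ι2]
  exact eq_neg_of_add_eq_zero_right h

lemma B2_sq : B2 * B2 = -1 := by
  have h : B2 * B2 = ι2 ![1,0] * (ι2 ![0,1] * ι2 ![1,0]) * ι2 ![0,1] := by
    simp [B2, mul_assoc]
  rw [h, e_anticomm]
  have h2 : ι2 ![1,0] * -(ι2 ![1,0] * ι2 ![0,1]) * ι2 ![0,1]
      = -((ι2 ![1,0] * ι2 ![1,0]) * (ι2 ![0,1] * ι2 ![0,1])) := by
    noncomm_ring
  rw [h2, e1_sq, e2_sq]; simp

def R2 (θ : ℝ) : Cl2 := algebraMap ℝ Cl2 (cos θ) + sin θ • B2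

lemma R2_mul (θ φ : ℝ) : R2 θ * R2 φ = R2 (θ + φ) := by
  simp only [R2, cos_add, sin_add]
  have hc : ∀ a : ℝ, algebraMap ℝ Cl2 a = a • (1 : Cl2) := fun a => by
    rw [Algebra.algebraMap_eq_smul_one]
  simp only [hc]
  rw [add_mul, mul_add, mul_add, smul_mul_smul_comm, smul_mul_smul_comm,
    smul_mul_smul_comm, smul_mul_smul_comm, B2_sq]
  simp only [one_mul, mul_one, smul_neg]
  module

lemma R2_pow (θ : ℝ) (k : ℕ) : R2 θ ^ (k + 1) = R2 ((k + 1) * θ) := by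
  induction k with
  | zero => simp
  | succ m ih =>
    rw [pow_succ, ih, R2_mul]
    congr 1
    push_cast
    ring

/-- For `n ≥ 1`, the Coxeter versor of `I₂(n)` satisfies
`W = −cos(π/n)·1 + sin(π/n)·ι(e₁)ι(e₂)` and `Wⁿ = (−1)^(n+1)·1`; in
particular the Coxeter element of `I₂(n)` has order `n`. -/
theorem coxeterVersor_I2n (n : ℕ) (hn : 1 ≤ n) :
    coxeterVersor n
      = algebraMap ℝ Cl2 (-cos (π / n)) + sin (π / n) • (ι2 ![1, 0] * ι2 ![0, 1]) ∧
    coxeterVersor n ^ n = (-1 : Cl2) ^ (n + 1) := by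
  have hα2 : α₂ n = (-cos (π / n)) • ![1, 0] + sin (π / n) • ![0, 1] := by
    funext i
    fin_cases i <;> simp [α₂]
  have h1 : coxeterVersor n
      = algebraMap ℝ Cl2 (-cos (π / n)) + sin (π / n) • (ι2 ![1, 0] * ι2 ![0, 1]) := by
    rw [coxeterVersor, show α₁ = ![1, 0] from rfl, hα2, map_add, map_smul, map_smul,
      mul_add, mul_smul_comm, mul_smul_comm, e1_sq]
    congr 1
    rw [Algebra.algebraMap_eq_smul_one]
  refine ⟨h1, ?_⟩
  have hW : coxeterVersor n = R2 (π - π / n) := by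
    rw [h1, R2, B2, cos_pi_sub, sin_pi_sub]
  obtain ⟨m, rfl⟩ := Nat.exists_eq_add_of_le hn
  rw [hW, Nat.add_comm 1 m, R2_pow]
  have hang : ((m : ℝ) + 1) * (π - π / ((m : ℝ) + 1)) = m * π := by
    have h0 : ((m : ℝ) + 1) ≠ 0 := by positivity
    field_simp
    ring
  have hc : ((m + 1 : ℕ) : ℝ) = (m : ℝ) + 1 := by push_cast; ring
  have hc2 : ((1 + m : ℕ) : ℝ) = (m : ℝ) + 1 := by push_cast; ring
  rw [hc, hang, R2, sin_nat_mul_pi]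
  have hcos : cos ((m : ℝ) * π) = (-1 : ℝ) ^ m := by
    have := cos_add_nat_mul_pi 0 m
    simpa using this
  rw [hcos]
  simp only [zero_smul, add_zero, map_pow, map_neg, map_one]
  have : m + 1 + 1 = m + 2 := by ring
  rw [this, pow_add]
  norm_num
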